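/- arXiv:1905.09442 — 3 statements merged into one kernel-verified Lean document; each statement's English description precedes it below -/
import Mathlib

section
/- Let p_ε̂ : ℝ → ℝ be an integrable probability density whose Fourier transform is integrable, p_N̂ an integrable probability density on ℝ^S, g : ℝ × ℝ^S → ℝ measurable, and y ∈ ℝ. Let q(x) = ∫ p_N̂(n̂) p_ε̂(x − g(y,n̂)) dn̂ denote the mixture density, and suppose that D(ν) := ∫ p_N̂(n̂) e^{−2πi g(y,n̂)·ν} dn̂ is nonzero for every ν. Then the Fourier transform of p_ε̂ satisfies ℱp_ε̂(ν) = ℱq(ν) / D(ν), and consequently, for almost every ε̂, p_ε̂(ε̂) = ∫ e^{2πi ε̂·ν} · ℱq(ν) / D(ν) dν. -/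
open MeasureTheory Complex FourierTransform
open scoped ContDiff
noncomputable def mySchwartz (g : ℝ → ℝ) (hg : ContDiff ℝ ∞ g) (hsupp : HasCompactSupport g) :
    SchwartzMap ℝ ℂ where
  toFun := fun x => (g x : ℂ)
  smooth' := Complex.ofRealCLM.contDiff.comp hg
  decay' := by
    intro k n
    have hgc : ContDiff ℝ ∞ (fun x => (g x : ℂ)) := Complex.ofRealCLM.contDiff.comp hg
    have hsc : HasCompactSupport (fun x => (g x : ℂ)) :=
      hsupp.comp_left (g := fun r : ℝ => (r : ℂ)) (by simp)
    have hits : HasCompactSupport (iteratedFDeriv ℝ n (fun x => (g x : ℂ))) :=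
      hsc.iteratedFDeriv n
    have hcont : Continuous (fun x : ℝ => ‖x‖ ^ k * ‖iteratedFDeriv ℝ n (fun x => (g x : ℂ)) x‖) :=
      ((continuous_norm.pow k)).mul (hgc.continuous_iteratedFDeriv (by exact_mod_cast le_top)).norm
    have hcs : HasCompactSupport
        (fun x : ℝ => ‖x‖ ^ k * ‖iteratedFDeriv ℝ n (fun x => (g x : ℂ)) x‖) :=
      (hits.norm).mul_left
    obtain ⟨C, hC⟩ := hcont.bounded_above_of_compact_support hcs
    exact ⟨C, fun x => le_trans (le_abs_self _) (hC x)⟩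

@[simp] lemma mySchwartz_apply (g : ℝ → ℝ) (hg : ContDiff ℝ ∞ g) (hs : HasCompactSupport g)
    (x : ℝ) : mySchwartz g hg hs x = (g x : ℂ) := rfl

theorem my_flip {f g : ℝ → ℂ} (hf : Integrable f) (hg : Integrable g) :
    ∫ ξ, 𝓕 f ξ * g ξ = ∫ x, f x * 𝓕 g x := by
  have hL : Continuous fun p : ℝ × ℝ => (innerₗ ℝ) p.1 p.2 := continuous_inner
  have hflip : (innerₗ ℝ).flip = innerₗ ℝ := by
    apply LinearMap.ext; intro x; apply LinearMap.ext; intro y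
    simp [real_inner_comm]
  have h := VectorFourier.integral_fourierIntegral_smul_eq_flip (e := Real.fourierChar)
      (L := innerₗ ℝ) (μ := volume) (ν := volume)
      Real.continuous_fourierChar hL hf hg
  rw [hflip] at h
  simp only [smul_eq_mul] at h
  exact h


theorem ae_fourier_inversion {f : ℝ → ℂ} (hf : Integrable f) (h'f : Integrable (𝓕 f)) :
    ∀ᵐ v : ℝ ∂(volume), f v = 𝓕⁻ (𝓕 f) v := by
  have hcont : Continuous (𝓕⁻ (𝓕 f)) := by
    apply VectorFourier.fourierIntegral_continuous Real.continuous_fourierChar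
      (by exact (continuous_inner (𝕜 := ℝ) (E := ℝ)).neg) h'f
  apply ae_eq_of_integral_contDiff_smul_eq hf.locallyIntegrable hcont.locallyIntegrable
  intro g gdiff gsupp
  set φn : SchwartzMap ℝ ℂ := mySchwartz (fun t => g (-t))
    (gdiff.comp (contDiff_id.neg)) (gsupp.comp_homeomorph (Homeomorph.neg ℝ)) with hφn
  have hφn_apply : ∀ x, φn x = (g (-x) : ℂ) := fun x => mySchwartz_apply _ _ _ x
  have hφn_fun : (φn : ℝ → ℂ) = fun x => (g (-x) : ℂ) := funext hφn_apply
  have hφnint : Integrable (φn : ℝ → ℂ) := φn.integrable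
  have hFφnint : Integrable (𝓕 (φn : ℝ → ℂ)) := by
    have := (SchwartzMap.fourierTransformCLM ℂ φn).integrable (μ := volume)
    simpa [SchwartzMap.fourierTransformCLM_apply, SchwartzMap.fourier_coe] using this
  -- inversion for the Schwartz function
  have hinv : 𝓕⁻ (𝓕 (φn : ℝ → ℂ)) = (φn : ℝ → ℂ) :=
    φn.continuous.fourierInv_fourier_eq hφnint hFφnint
  have hFFφn : ∀ x : ℝ, 𝓕 (𝓕 (φn : ℝ → ℂ)) x = (g x : ℂ) := by
    intro x
    have h1 : 𝓕⁻ (𝓕 (φn : ℝ → ℂ)) (-x) = 𝓕 (𝓕 (φn : ℝ → ℂ)) x := by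
      rw [Real.fourierInv_eq_fourier_neg, neg_neg]
    rw [← h1, hinv, hφn_apply, neg_neg]
  symm
  calc ∫ x, g x • 𝓕⁻ (𝓕 f) x
      = ∫ x, (g x : ℂ) * 𝓕 (𝓕 f) (-x) := by
        congr 1; funext x
        rw [Real.fourierInv_eq_fourier_neg, Complex.real_smul]
    _ = ∫ x, (g (-x) : ℂ) * 𝓕 (𝓕 f) x := by
        rw [← integral_neg_eq_self (fun x => (g (-x) : ℂ) * 𝓕 (𝓕 f) x) volume]
        simp
    _ = ∫ x, 𝓕 (𝓕 f) x * φn x := by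
        congr 1; funext x; rw [hφn_apply, mul_comm]
    _ = ∫ w, 𝓕 f w * 𝓕 (φn : ℝ → ℂ) w := my_flip h'f hφnint
    _ = ∫ x, f x * 𝓕 (𝓕 (φn : ℝ → ℂ)) x := my_flip hf hFφnint
    _ = ∫ x, g x • f x := by
        congr 1; funext x; rw [hFFφn x, Complex.real_smul, mul_comm]

theorem my_ofReal_integral {α : Type*} [MeasurableSpace α] {μ : MeasureTheory.Measure α}
    (f : α → ℝ) : ((∫ a, f a ∂μ : ℝ) : ℂ) = ∫ a, ((f a : ℝ) : ℂ) ∂μ :=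
  (integral_ofReal (𝕜 := ℂ)).symm


/-- dividing the Fourier transform of the backward mixture density by the
(nowhere vanishing) Fourier transform of the mixing kernel recovers the Fourier transform
of the backward noise density, and Fourier inversion recovers the density itself. -/
theorem backward_noise_density_by_deconvolution {S : ℕ}
    (pEpsHat : ℝ → ℝ) (pNhat : (Fin S → ℝ) → ℝ) (g : ℝ × (Fin S → ℝ) → ℝ)
    (hg : Measurable g)
    (hEint : Integrable pEpsHat) (hE0 : ∀ e, 0 ≤ pEpsHat e) (hE1 : ∫ e, pEpsHat e = 1)
    (hFEint : Integrable (fun ν : ℝ =>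
      ∫ e : ℝ, (pEpsHat e : ℂ) * Complex.exp (-2 * Real.pi * Complex.I * e * ν)))
    (hNint : Integrable pNhat) (hN0 : ∀ n, 0 ≤ pNhat n) (hN1 : ∫ n, pNhat n = 1)
    (y : ℝ)
    (q : ℝ → ℝ) (hq : q = fun x => ∫ n : Fin S → ℝ, pNhat n * pEpsHat (x - g (y, n)))
    (D : ℝ → ℂ) (hD : D = fun ν : ℝ => ∫ n : Fin S → ℝ, (pNhat n : ℂ) *
        Complex.exp (-2 * Real.pi * Complex.I * (g (y, n)) * ν))
    (hDne : ∀ ν : ℝ, D ν ≠ 0) :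
    (∀ ν : ℝ,
      (∫ e : ℝ, (pEpsHat e : ℂ) * Complex.exp (-2 * Real.pi * Complex.I * e * ν))
        = (∫ x : ℝ, (q x : ℂ) * Complex.exp (-2 * Real.pi * Complex.I * x * ν)) / D ν)
    ∧ (∀ᵐ e : ℝ ∂volume, (pEpsHat e : ℂ) =
        ∫ ν : ℝ, Complex.exp (2 * Real.pi * Complex.I * e * ν) *
          (∫ x : ℝ, (q x : ℂ) * Complex.exp (-2 * Real.pi * Complex.I * x * ν)) / D ν) := by
  set F : ℝ → ℂ := fun ν => ∫ e : ℝ, (pEpsHat e : ℂ) *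
      Complex.exp (-2 * Real.pi * Complex.I * e * ν) with hF
  -- Fubini: the Fourier transform of q factors
  have hkey : ∀ ν : ℝ, (∫ x : ℝ, (q x : ℂ) * Complex.exp (-2 * Real.pi * Complex.I * x * ν))
      = D ν * F ν := by
    intro ν
    have hT : MeasurePreserving (fun p : (Fin S → ℝ) × ℝ => (p.1, p.2 - g (y, p.1)))
        (volume.prod volume) (volume.prod volume) := by
      apply MeasurePreserving.skew_product (MeasurePreserving.id volume)
        (g := fun n x => x - g (y, n))
      · exact measurable_snd.sub (hg.comp (measurable_const.prodMk measurable_fst))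
      · exact Filter.Eventually.of_forall
          (fun n => (measurePreserving_sub_right volume (g (y, n))).map_eq)
    have h1 : Integrable (fun p : (Fin S → ℝ) × ℝ => pNhat p.1 * pEpsHat p.2)
        (volume.prod volume) := hNint.mul_prod hEint
    have h2 : Integrable (fun p : (Fin S → ℝ) × ℝ => pNhat p.1 * pEpsHat (p.2 - g (y, p.1)))
        (volume.prod volume) := by
      have := (hT.integrable_comp h1.aestronglyMeasurable).mpr h1
      exact this
    have hexp_norm : ∀ x : ℝ, ‖Complex.exp (-2 * Real.pi * Complex.I * x * ν)‖ = 1 := by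
      intro x
      have : (-2 * (Real.pi : ℂ) * Complex.I * x * ν) = ((-2 * Real.pi * x * ν : ℝ) : ℂ) *
          Complex.I := by push_cast; ring
      rw [this, Complex.norm_exp_ofReal_mul_I]
    have h3 : Integrable (Function.uncurry fun (n : Fin S → ℝ) (x : ℝ) =>
        ((pNhat n : ℂ) * (pEpsHat (x - g (y, n)) : ℂ)) *
          Complex.exp (-2 * Real.pi * Complex.I * x * ν)) (volume.prod volume) := by
      have h2c : Integrable (fun p : (Fin S → ℝ) × ℝ =>
          ((pNhat p.1 * pEpsHat (p.2 - g (y, p.1)) : ℝ) : ℂ)) (volume.prod volume) :=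
        h2.ofReal
      have hb := h2c.bdd_mul
        (f := fun p : (Fin S → ℝ) × ℝ => Complex.exp (-2 * Real.pi * Complex.I * p.2 * ν))
        ((Complex.continuous_exp.comp (by fun_prop)).aestronglyMeasurable)
        (c := 1) (Filter.Eventually.of_forall fun p => le_of_eq (hexp_norm p.2))
      apply hb.congr
      filter_upwards with p
      simp only [Function.uncurry]
      push_cast
      ring
    have hqx : ∀ x : ℝ, ((q x : ℝ) : ℂ) * Complex.exp (-2 * Real.pi * Complex.I * x * ν)
        = ∫ n : Fin S → ℝ, ((pNhat n : ℂ) * (pEpsHat (x - g (y, n)) : ℂ)) *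
            Complex.exp (-2 * Real.pi * Complex.I * x * ν) := by
      intro x
      rw [integral_mul_const]
      congr 1
      simp only [hq]
      rw [my_ofReal_integral]
      exact integral_congr_ae (Filter.Eventually.of_forall fun n => by push_cast; ring)
    calc (∫ x : ℝ, (q x : ℂ) * Complex.exp (-2 * Real.pi * Complex.I * x * ν))
        = ∫ x : ℝ, ∫ n : Fin S → ℝ, ((pNhat n : ℂ) * (pEpsHat (x - g (y, n)) : ℂ)) *
            Complex.exp (-2 * Real.pi * Complex.I * x * ν) := by
          exact integral_congr_ae (Filter.Eventually.of_forall fun x => hqx x)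
      _ = ∫ n : Fin S → ℝ, ∫ x : ℝ, ((pNhat n : ℂ) * (pEpsHat (x - g (y, n)) : ℂ)) *
            Complex.exp (-2 * Real.pi * Complex.I * x * ν) :=
          (integral_integral_swap h3).symm
      _ = ∫ n : Fin S → ℝ, ((pNhat n : ℂ) *
            Complex.exp (-2 * Real.pi * Complex.I * (g (y, n)) * ν)) * F ν := by
          apply integral_congr_ae
          filter_upwards with n
          set Phi : ℝ → ℂ := fun u : ℝ => ((pNhat n : ℂ) *
              ((pEpsHat u : ℂ) * Complex.exp (-2 * Real.pi * Complex.I * u * ν))) *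
                Complex.exp (-2 * Real.pi * Complex.I * (g (y, n)) * ν) with hPhi
          have hsub : ∀ x : ℝ, ((pNhat n : ℂ) * (pEpsHat (x - g (y, n)) : ℂ)) *
              Complex.exp (-2 * Real.pi * Complex.I * x * ν) = Phi (x - g (y, n)) := by
            intro x
            have hexp : Complex.exp (-2 * Real.pi * Complex.I * ((x - g (y, n)) : ℝ) * ν) *
                Complex.exp (-2 * Real.pi * Complex.I * (g (y, n)) * ν)
                = Complex.exp (-2 * Real.pi * Complex.I * x * ν) := by
              rw [← Complex.exp_add]
              congr 1
              push_cast
              ring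
            simp only [hPhi]
            rw [← hexp]
            ring
          rw [integral_congr_ae (Filter.Eventually.of_forall hsub),
            integral_sub_right_eq_self Phi (g (y, n))]
          simp only [hPhi]
          rw [integral_mul_const, integral_const_mul]
          simp only [hF]
          ring
      _ = D ν * F ν := by rw [integral_mul_const, hD]
  have hpart1 : ∀ ν : ℝ, F ν = (∫ x : ℝ, (q x : ℂ) *
      Complex.exp (-2 * Real.pi * Complex.I * x * ν)) / D ν := by
    intro ν
    rw [eq_div_iff (hDne ν), hkey ν]
    ring
  refine ⟨hpart1, ?_⟩
  -- Part 2 : inversion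
  set fC : ℝ → ℂ := fun e => (pEpsHat e : ℂ) with hfCdef
  have hfC : Integrable fC := hEint.ofReal
  have hFC : ∀ ν : ℝ, 𝓕 fC ν = F ν := by
    intro ν
    rw [Real.fourier_real_eq_integral_exp_smul]
    apply integral_congr_ae
    filter_upwards with v
    rw [smul_eq_mul, mul_comm]
    congr 1
    push_cast
    ring
  have hFint : Integrable (𝓕 fC) :=
    hFEint.congr (Filter.Eventually.of_forall fun ν => (hFC ν).symm)
  filter_upwards [ae_fourier_inversion hfC hFint] with e he
  have : (pEpsHat e : ℂ) = 𝓕⁻ (𝓕 fC) e := he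
  rw [this, Real.fourierInv_eq_fourier_neg,
    Real.fourier_real_eq_integral_exp_smul]
  apply integral_congr_ae
  filter_upwards with ν
  rw [smul_eq_mul, hFC ν, hpart1 ν, mul_div_assoc]
  congr 2
  push_cast
  ring
end

section
/- Let a, b ∈ ℝ and let X, N, ε be independent standard Gaussian random variables (mean 0, variance 1), with Y = aX + bN + ε. Set c = a/(a²+b²+1). Then there exist nonnegative constants d, e with d² + e² = (b²+1)/(a²+b²+1) such that the joint law of (X, Y) equals the joint law of (cY' + dN̂ + eε̂, Y'), where Y' is Gaussian with mean 0 and variance a²+b²+1, N̂ and ε̂ are standard Gaussian, and Y', N̂, ε̂ are mutually independent. In particular, the linear Gaussian cascade additive noise model admits a backward model of the same form, and is therefore unidentifiable. -/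
open MeasureTheory ProbabilityTheory Real
open scoped ENNReal NNReal

lemma gpdf_eq (α v w : ℝ) (hv : 0 < v) (hw : 0 < w) (x y : ℝ) :
    gaussianPDFReal 0 v.toNNReal x * gaussianPDFReal 0 w.toNNReal (y - α * x)
      = gaussianPDFReal 0 (α ^ 2 * v + w).toNNReal y *
        gaussianPDFReal 0 (v * w / (α ^ 2 * v + w)).toNNReal
          (x - (α * v / (α ^ 2 * v + w)) * y) := by
  have hs : (0:ℝ) < α ^ 2 * v + w := by positivity
  have ht : (0:ℝ) < v * w / (α ^ 2 * v + w) := by positivity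
  unfold gaussianPDFReal
  rw [Real.coe_toNNReal v hv.le, Real.coe_toNNReal w hw.le, Real.coe_toNNReal _ hs.le,
    Real.coe_toNNReal _ ht.le]
  rw [mul_mul_mul_comm, mul_mul_mul_comm ((√(2 * π * (α ^ 2 * v + w)))⁻¹)]
  congr 1
  · rw [← mul_inv, ← mul_inv, ← Real.sqrt_mul (by positivity), ← Real.sqrt_mul (by positivity)]
    congr 2
    field_simp
  · rw [← Real.exp_add, ← Real.exp_add]
    congr 1
    field_simp
    ring

lemma gpdf_ennreal_eq (α v w : ℝ) (hv : 0 < v) (hw : 0 < w) (x y : ℝ) :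
    gaussianPDF 0 v.toNNReal x * gaussianPDF 0 w.toNNReal (y - α * x)
      = gaussianPDF 0 (α ^ 2 * v + w).toNNReal y *
        gaussianPDF 0 (v * w / (α ^ 2 * v + w)).toNNReal
          (x - (α * v / (α ^ 2 * v + w)) * y) := by
  simp only [gaussianPDF_def]
  rw [← ENNReal.ofReal_mul (gaussianPDFReal_nonneg _ _ _),
    ← ENNReal.ofReal_mul (gaussianPDFReal_nonneg _ _ _), gpdf_eq α v w hv hw x y]

/-- lintegral over a product of two nondegenerate centered gaussians -/
lemma lint_gauss_prod (v w : ℝ) (hv : 0 < v) (hw : 0 < w) (f : ℝ × ℝ → ℝ≥0∞)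
    (hf : Measurable f) :
    ∫⁻ p, f p ∂((gaussianReal 0 v.toNNReal).prod (gaussianReal 0 w.toNNReal))
      = ∫⁻ x, ∫⁻ u, gaussianPDF 0 v.toNNReal x * (gaussianPDF 0 w.toNNReal u * f (x, u)) := by
  have hv' : v.toNNReal ≠ 0 := by simp [Real.toNNReal_eq_zero, not_le, hv]
  have hw' : w.toNNReal ≠ 0 := by simp [Real.toNNReal_eq_zero, not_le, hw]
  have hpv : Measurable (gaussianPDF 0 v.toNNReal) := measurable_gaussianPDF _ _
  have hpw : Measurable (gaussianPDF 0 w.toNNReal) := measurable_gaussianPDF _ _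
  rw [MeasureTheory.lintegral_prod f hf.aemeasurable]
  rw [gaussianReal_of_var_ne_zero 0 hv', gaussianReal_of_var_ne_zero 0 hw']
  have hinner : ∀ x : ℝ, ∫⁻ u, f (x, u) ∂(volume.withDensity (gaussianPDF 0 w.toNNReal))
      = ∫⁻ u, gaussianPDF 0 w.toNNReal u * f (x, u) := by
    intro x
    rw [lintegral_withDensity_eq_lintegral_mul _ hpw (by fun_prop)]
    rfl
  simp only [hinner]
  rw [lintegral_withDensity_eq_lintegral_mul _ hpv
    (Measurable.lintegral_prod_right (f := fun x u => gaussianPDF 0 w.toNNReal u * f (x, u))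
      (by fun_prop))]
  congr 1 with x
  simp only [Pi.mul_apply]
  rw [← lintegral_const_mul _ (by fun_prop)]

lemma gauss2d (α v w : ℝ) (hv : 0 < v) (hw : 0 < w) :
    Measure.map (fun p : ℝ × ℝ => (p.1, α * p.1 + p.2))
        ((gaussianReal 0 v.toNNReal).prod (gaussianReal 0 w.toNNReal))
      = Measure.map (fun p : ℝ × ℝ => ((α * v / (α ^ 2 * v + w)) * p.1 + p.2, p.1))
        ((gaussianReal 0 (α ^ 2 * v + w).toNNReal).prod
          (gaussianReal 0 (v * w / (α ^ 2 * v + w)).toNNReal)) := by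
  have hs : (0:ℝ) < α ^ 2 * v + w := by positivity
  have ht : (0:ℝ) < v * w / (α ^ 2 * v + w) := by positivity
  set β := α * v / (α ^ 2 * v + w) with hβ
  have hm1 : Measurable (gaussianPDF 0 v.toNNReal) := measurable_gaussianPDF _ _
  have hm2 : Measurable (gaussianPDF 0 w.toNNReal) := measurable_gaussianPDF _ _
  have hm3 : Measurable (gaussianPDF 0 (α ^ 2 * v + w).toNNReal) := measurable_gaussianPDF _ _
  have hm4 : Measurable (gaussianPDF 0 (v * w / (α ^ 2 * v + w)).toNNReal) :=
    measurable_gaussianPDF _ _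
  have hr1 : Measurable (gaussianPDFReal 0 v.toNNReal) := measurable_gaussianPDFReal _ _
  have hr2 : Measurable (gaussianPDFReal 0 w.toNNReal) := measurable_gaussianPDFReal _ _
  have hr3 : Measurable (gaussianPDFReal 0 (α ^ 2 * v + w).toNNReal) :=
    measurable_gaussianPDFReal _ _
  have hr4 : Measurable (gaussianPDFReal 0 (v * w / (α ^ 2 * v + w)).toNNReal) :=
    measurable_gaussianPDFReal _ _
  ext A hA
  have hind : Measurable (A.indicator (1 : ℝ × ℝ → ℝ≥0∞)) := measurable_one.indicator hA
  rw [Measure.map_apply (by fun_prop) hA, Measure.map_apply (by fun_prop) hA]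
  have hpre : ∀ (T : ℝ × ℝ → ℝ × ℝ) (hT : Measurable T) (μ : Measure (ℝ × ℝ)),
      μ (T ⁻¹' A) = ∫⁻ p, A.indicator 1 (T p) ∂μ := by
    intro T hT μ
    rw [← lintegral_indicator_one (hT hA)]
    exact lintegral_congr fun p => by by_cases hp : T p ∈ A <;> simp [hp]
  rw [hpre _ (by fun_prop) _, hpre _ (by fun_prop) _]
  rw [lint_gauss_prod v w hv hw (fun p => A.indicator 1 (p.1, α * p.1 + p.2))
      (hind.comp (by fun_prop)),
    lint_gauss_prod _ _ hs ht (fun p => A.indicator 1 (β * p.1 + p.2, p.1))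
      (hind.comp (by fun_prop))]
  have lhs_inner : ∀ x : ℝ,
      (∫⁻ u, gaussianPDF 0 v.toNNReal x *
        (gaussianPDF 0 w.toNNReal u * A.indicator 1 (x, α * x + u)))
      = ∫⁻ y, gaussianPDF 0 (α ^ 2 * v + w).toNNReal y *
          (gaussianPDF 0 (v * w / (α ^ 2 * v + w)).toNNReal (x - β * y) * A.indicator 1 (x, y)) := by
    intro x
    rw [← (measurePreserving_add_right (volume : Measure ℝ) (-(α * x))).lintegral_comp
      (f := fun u => gaussianPDF 0 v.toNNReal x *
        (gaussianPDF 0 w.toNNReal u * A.indicator 1 (x, α * x + u)))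
      (by exact Measurable.const_mul ((Measurable.comp (by fun_prop) (by fun_prop)).mul
        (hind.comp (by fun_prop))) _)]
    congr 1 with y
    have h1 : α * x + (y + -(α * x)) = y := by ring
    have h2 : y + -(α * x) = y - α * x := by ring
    rw [h1, h2, ← mul_assoc, gpdf_ennreal_eq α v w hv hw x y, mul_assoc]
  simp only [lhs_inner]
  have rhs_inner : ∀ y : ℝ,
      (∫⁻ u, gaussianPDF 0 (α ^ 2 * v + w).toNNReal y *
        (gaussianPDF 0 (v * w / (α ^ 2 * v + w)).toNNReal u * A.indicator 1 (β * y + u, y)))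
      = ∫⁻ x, gaussianPDF 0 (α ^ 2 * v + w).toNNReal y *
          (gaussianPDF 0 (v * w / (α ^ 2 * v + w)).toNNReal (x - β * y) * A.indicator 1 (x, y)) := by
    intro y
    rw [← (measurePreserving_add_right (volume : Measure ℝ) (-(β * y))).lintegral_comp
      (f := fun u => gaussianPDF 0 (α ^ 2 * v + w).toNNReal y *
        (gaussianPDF 0 (v * w / (α ^ 2 * v + w)).toNNReal u * A.indicator 1 (β * y + u, y)))
      (by exact Measurable.const_mul ((Measurable.comp (by fun_prop) (by fun_prop)).mul
        (hind.comp (by fun_prop))) _)]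
    congr 1 with x
    have h1 : β * y + (x + -(β * y)) = x := by ring
    have h2 : x + -(β * y) = x - β * y := by ring
    rw [h1, h2]
  simp only [rhs_inner]
  exact (lintegral_lintegral_swap (by
    apply Measurable.aemeasurable
    apply Measurable.mul
    · fun_prop
    · exact (Measurable.comp (by fun_prop) (by fun_prop)).mul (hind.comp (by fun_prop)))).symm

lemma gauss_sum (v w : ℝ) (hv : 0 ≤ v) (hw : 0 < w) :
    Measure.map (fun p : ℝ × ℝ => p.1 + p.2)
        ((gaussianReal 0 v.toNNReal).prod (gaussianReal 0 w.toNNReal))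
      = gaussianReal 0 (v + w).toNNReal := by
  rcases eq_or_lt_of_le hv with hv0 | hv0
  · rw [← hv0]
    simp only [Real.toNNReal_zero, gaussianReal_zero_var, zero_add]
    rw [Measure.dirac_prod, Measure.map_map (by fun_prop) (by fun_prop)]
    have : ((fun p : ℝ × ℝ => p.1 + p.2) ∘ Prod.mk 0) = id := by
      funext u; simp
    rw [this, Measure.map_id]
  · have h := congrArg (Measure.map (Prod.snd : ℝ × ℝ → ℝ)) (gauss2d 1 v w hv0 hw)
    rw [Measure.map_map (by fun_prop) (by fun_prop),
      Measure.map_map (by fun_prop) (by fun_prop)] at h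
    have h1 : ((Prod.snd : ℝ × ℝ → ℝ) ∘ fun p : ℝ × ℝ => (p.1, 1 * p.1 + p.2))
        = fun p : ℝ × ℝ => p.1 + p.2 := by funext p; simp
    have h2 : ((Prod.snd : ℝ × ℝ → ℝ) ∘
        fun p : ℝ × ℝ => ((1 * v / (1 ^ 2 * v + w)) * p.1 + p.2, p.1))
        = Prod.fst := by funext p; simp
    rw [h1, h2, Measure.map_fst_prod] at h
    simpa using h

lemma gauss_affine_sum (k l : ℝ) (hl : l ≠ 0) :
    Measure.map (fun q : ℝ × ℝ => k * q.1 + l * q.2)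
        ((gaussianReal 0 1).prod (gaussianReal 0 1))
      = gaussianReal 0 (k ^ 2 + l ^ 2).toNNReal := by
  have hcomp : (fun q : ℝ × ℝ => k * q.1 + l * q.2)
      = (fun p : ℝ × ℝ => p.1 + p.2) ∘ Prod.map (fun x => k * x) (fun x => l * x) := rfl
  rw [hcomp, ← Measure.map_map (by fun_prop) (by fun_prop),
    ← Measure.map_prod_map _ _ (by fun_prop) (by fun_prop),
    gaussianReal_map_const_mul k, gaussianReal_map_const_mul l]
  have ek : gaussianReal (k * 0) (NNReal.mk (k ^ 2) (sq_nonneg k) * 1 : ℝ≥0)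
      = gaussianReal 0 (k ^ 2 : ℝ).toNNReal := by
    congr 1
    · ring
    · ext; simp [Real.coe_toNNReal _ (sq_nonneg k)]
  have el : gaussianReal (l * 0) (NNReal.mk (l ^ 2) (sq_nonneg l) * 1 : ℝ≥0)
      = gaussianReal 0 (l ^ 2 : ℝ).toNNReal := by
    congr 1
    · ring
    · ext; simp [Real.coe_toNNReal _ (sq_nonneg l)]
  rw [ek, el]
  exact gauss_sum _ _ (sq_nonneg k) (by positivity)

/-- Corollary 1 of the paper: the linear Gaussian cascade additive noise
model `Y = aX + bN + ε` admits a backward model of the same form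
`X = cY' + dN̂ + eε̂` with `Y', N̂, ε̂` mutually independent Gaussians, hence is
unidentifiable. -/
theorem linear_gaussian_canm_unidentifiable {Ω : Type*} [MeasurableSpace Ω]
    (P : Measure Ω) [IsProbabilityMeasure P]
    (a b : ℝ) (X N ε : Ω → ℝ)
    (hX : Measurable X) (hN : Measurable N) (hε : Measurable ε)
    (hindep : iIndepFun ![X, N, ε] P)
    (hXlaw : P.map X = gaussianReal 0 1)
    (hNlaw : P.map N = gaussianReal 0 1)
    (hεlaw : P.map ε = gaussianReal 0 1)
    (Y : Ω → ℝ) (hY : Y = fun ω => a * X ω + b * N ω + ε ω)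
    (c : ℝ) (hc : c = a / (a ^ 2 + b ^ 2 + 1)) :
    ∃ d e : ℝ, 0 ≤ d ∧ 0 ≤ e ∧
      d ^ 2 + e ^ 2 = (b ^ 2 + 1) / (a ^ 2 + b ^ 2 + 1) ∧
      P.map (fun ω => (X ω, Y ω))
        = Measure.map (fun v : ℝ × ℝ × ℝ => (c * v.1 + d * v.2.1 + e * v.2.2, v.1))
            ((gaussianReal 0 ((a ^ 2 + b ^ 2 + 1 : ℝ)).toNNReal).prod
              ((gaussianReal 0 1).prod (gaussianReal 0 1))) := by
  have hσ : (0:ℝ) < a ^ 2 + b ^ 2 + 1 := by positivity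
  set d : ℝ := Real.sqrt ((b ^ 2 + 1) / (a ^ 2 + b ^ 2 + 1) / 2) with hd
  have hdpos : 0 < d := Real.sqrt_pos.mpr (by positivity)
  have hd2 : d ^ 2 = (b ^ 2 + 1) / (a ^ 2 + b ^ 2 + 1) / 2 :=
    Real.sq_sqrt (by positivity)
  refine ⟨d, d, hdpos.le, hdpos.le, by rw [hd2]; ring, ?_⟩
  -- joint law of (X, (N, ε)) is the product of three standard gaussians
  have hmeas : ∀ i, Measurable (![X, N, ε] i) := by
    intro i; fin_cases i <;> simpa
  have hNε : P.map (fun ω => (N ω, ε ω)) = (gaussianReal 0 1).prod (gaussianReal 0 1) := by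
    have h : IndepFun N ε P := by
      have := hindep.indepFun (i := 1) (j := 2) (by decide)
      simpa using this
    rw [indepFun_iff_map_prod_eq_prod_map_map hN.aemeasurable hε.aemeasurable] at h
    rw [h, hNlaw, hεlaw]
  have hjoint : P.map (fun ω => (X ω, (N ω, ε ω)))
      = (gaussianReal 0 1).prod ((gaussianReal 0 1).prod (gaussianReal 0 1)) := by
    have h : IndepFun X (fun ω => (N ω, ε ω)) P := by
      have := (hindep.indepFun_prodMk hmeas 1 2 0 (by decide) (by decide)).symm
      simpa using this
    rw [indepFun_iff_map_prod_eq_prod_map_map hX.aemeasurable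
      (hN.prodMk hε).aemeasurable] at h
    rw [h, hXlaw, hNε]
  -- express the forward law as a pushforward
  have hXY : P.map (fun ω => (X ω, Y ω))
      = Measure.map (fun q : ℝ × ℝ × ℝ => (q.1, a * q.1 + (b * q.2.1 + q.2.2)))
          ((gaussianReal 0 1).prod ((gaussianReal 0 1).prod (gaussianReal 0 1))) := by
    rw [← hjoint, Measure.map_map (by fun_prop) (by fun_prop)]
    congr 1
    funext ω
    simp only [Function.comp_apply, hY]
    congr 1
    ring
  -- reduce the second component
  have honeNN : ((1 : ℝ≥0) : ℝ≥0) = (1 : ℝ).toNNReal := by simp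
  have hL : P.map (fun ω => (X ω, Y ω))
      = Measure.map (fun p : ℝ × ℝ => (p.1, a * p.1 + p.2))
          ((gaussianReal 0 (1 : ℝ).toNNReal).prod
            (gaussianReal 0 (b ^ 2 + 1 : ℝ).toNNReal)) := by
    rw [hXY]
    have hcomp : (fun q : ℝ × ℝ × ℝ => (q.1, a * q.1 + (b * q.2.1 + q.2.2)))
        = (fun p : ℝ × ℝ => (p.1, a * p.1 + p.2))
          ∘ Prod.map (id : ℝ → ℝ) (fun r : ℝ × ℝ => b * r.1 + r.2) := rfl
    rw [hcomp, ← Measure.map_map (by fun_prop) (by fun_prop),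
      ← Measure.map_prod_map _ _ measurable_id (by fun_prop), Measure.map_id]
    have hb : Measure.map (fun r : ℝ × ℝ => b * r.1 + r.2)
        ((gaussianReal 0 1).prod (gaussianReal 0 1))
        = gaussianReal 0 (b ^ 2 + 1 : ℝ).toNNReal := by
      have := gauss_affine_sum b 1 one_ne_zero
      simpa using this
    rw [hb, honeNN]
  -- apply the 2d gaussian lemma
  have key := gauss2d a 1 (b ^ 2 + 1) one_pos (by positivity)
  have e1 : a ^ 2 * 1 + (b ^ 2 + 1) = a ^ 2 + b ^ 2 + 1 := by ring
  have e2 : a * 1 / (a ^ 2 + b ^ 2 + 1) = c := by rw [hc]; ring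
  have e3 : 1 * (b ^ 2 + 1) / (a ^ 2 + b ^ 2 + 1) = (b ^ 2 + 1) / (a ^ 2 + b ^ 2 + 1) := by
    ring
  rw [e1, e2, e3] at key
  rw [hL, key]
  -- now identify the right-hand side
  have hcomp2 : (fun v : ℝ × ℝ × ℝ => (c * v.1 + d * v.2.1 + d * v.2.2, v.1))
      = (fun p : ℝ × ℝ => (c * p.1 + p.2, p.1))
        ∘ Prod.map (id : ℝ → ℝ) (fun r : ℝ × ℝ => d * r.1 + d * r.2) := by
    funext v
    dsimp [Prod.map]
    congr 1
    ring
  rw [hcomp2, ← Measure.map_map (by fun_prop) (by fun_prop),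
    ← Measure.map_prod_map _ _ measurable_id (by fun_prop), Measure.map_id]
  have hdsum : Measure.map (fun r : ℝ × ℝ => d * r.1 + d * r.2)
      ((gaussianReal 0 1).prod (gaussianReal 0 1))
      = gaussianReal 0 ((b ^ 2 + 1) / (a ^ 2 + b ^ 2 + 1) : ℝ).toNNReal := by
    rw [gauss_affine_sum d d hdpos.ne']
    congr 1
    rw [hd2]
    ring
  rw [hdsum]
end

section
/- Let f : ℝ → ℝ and g : ℝ → ℝ be functions, let p_X, p_ε, p_ε̂, p_Y be strictly positive probability densities on ℝ with p_X, p_ε three times continuously differentiable and f three times continuously differentiable, and write ν := log p_ε and ξ := log p_X. Suppose that for all x, y ∈ ℝ the backward additive-noise density identity holds: p_ε̂(x − g(y)) = p_X(x) · p_ε(y − f(x)) / p_Y(y). Then for all x, y with ν''(y − f(x)) · f'(x) ≠ 0, the triple (f, p_X, p_ε) satisfies the differential equation ξ''' = ξ'' ( −ν''' f' / ν'' + f'' / f' ) − 2 ν'' f'' f' + ν' f''' + ν' ν''' f'' f' / ν'' − ν' (f'')² / f', where ν and its derivatives are evaluated at y − f(x) and ξ, f and their derivatives at x. -/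
open MeasureTheory Filter Topology Set


/-- Core pointwise lemma: if the family of `y`-slices of `P` are all translates of a base
slice, with translate amounts converging along some sequence approaching `y₁`, then the
Hoyer determinant identity holds at `(x₀, y₁)`. -/
lemma core_point
    (P A Ax B Ay : ℝ → ℝ → ℝ) (s : ℝ → ℝ) (y₀ x₀ y₁ : ℝ)
    (hPA : ∀ y x, HasDerivAt (fun x' => P y x') (A y x) x)
    (hAAx : ∀ y x, HasDerivAt (fun x' => A y x') (Ax y x) x)
    (hPB : ∀ y x, HasDerivAt (fun y' => P y' x) (B y x) y)
    (hAAy : ∀ y x, HasDerivAt (fun y' => A y' x) (Ay y x) y)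
    (hPt : ∀ y x, P y x = P y₀ (x + s y))
    (hAt : ∀ y x, A y x = A y₀ (x + s y))
    (w : ℕ → ℝ) (hw : Tendsto w atTop (𝓝 y₁)) (hwne : ∀ k, w k ≠ y₁)
    (hsw : Tendsto (fun k => s (w k)) atTop (𝓝 (s y₁))) :
    A y₁ x₀ * Ay y₁ x₀ = Ax y₁ x₀ * B y₁ x₀ := by
  -- relative translates
  have hPt' : ∀ y x, P y x = P y₁ (x + (s y - s y₁)) := by
    intro y x
    rw [hPt y x, hPt y₁ (x + (s y - s y₁))]
    congr 1
    ring
  have hAt' : ∀ y x, A y x = A y₁ (x + (s y - s y₁)) := by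
    intro y x
    rw [hAt y x, hAt y₁ (x + (s y - s y₁))]
    congr 1
    ring
  set r : ℕ → ℝ := fun k => s (w k) - s y₁ with hr_def
  have hr0 : Tendsto r atTop (𝓝 0) := by
    have := hsw.sub (tendsto_const_nhds (x := s y₁))
    simpa using this
  set Δ : ℕ → ℝ := fun k => w k - y₁ with hΔ_def
  have hΔne : ∀ k, Δ k ≠ 0 := fun k => sub_ne_zero.2 (hwne k)
  set t : ℕ → ℝ := fun k => r k / Δ k with ht_def
  set Qp : ℕ → ℝ := fun k => (P (w k) x₀ - P y₁ x₀) / Δ k with hQp_def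
  set Qa : ℕ → ℝ := fun k => (A (w k) x₀ - A y₁ x₀) / Δ k with hQa_def
  -- tendsto to nhdsWithin
  have hwW : Tendsto w atTop (𝓝[≠] y₁) :=
    tendsto_nhdsWithin_of_tendsto_nhds_of_eventually_within w hw
      (Eventually.of_forall fun k => hwne k)
  -- Qp tends to B y₁ x₀
  have hQpT : Tendsto Qp atTop (𝓝 (B y₁ x₀)) := by
    have h1 := (hasDerivAt_iff_tendsto_slope.1 (hPB y₁ x₀)).comp hwW
    have : (fun k => slope (fun y' => P y' x₀) y₁ (w k)) = Qp := by
      funext k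
      simp [slope_def_field, hQp_def, hΔ_def]
    rwa [← this]
  have hQaT : Tendsto Qa atTop (𝓝 (Ay y₁ x₀)) := by
    have h1 := (hasDerivAt_iff_tendsto_slope.1 (hAAy y₁ x₀)).comp hwW
    have : (fun k => slope (fun y' => A y' x₀) y₁ (w k)) = Qa := by
      funext k
      simp [slope_def_field, hQa_def, hΔ_def]
    rwa [← this]
  -- slope helper functions
  set ΦP : ℝ → ℝ := fun ρ => if ρ = 0 then A y₁ x₀ else (P y₁ (x₀ + ρ) - P y₁ x₀) / ρ with hΦP_def
  set ΦA : ℝ → ℝ := fun ρ => if ρ = 0 then Ax y₁ x₀ else (A y₁ (x₀ + ρ) - A y₁ x₀) / ρ with hΦA_def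
  have hmap : Tendsto (fun ρ : ℝ => x₀ + ρ) (𝓝[≠] (0:ℝ)) (𝓝[≠] x₀) := by
    apply tendsto_nhdsWithin_of_tendsto_nhds_of_eventually_within
    · have : Tendsto (fun ρ : ℝ => x₀ + ρ) (𝓝 (0:ℝ)) (𝓝 (x₀ + 0)) :=
        (continuous_const.add continuous_id).tendsto 0
      simpa using this.mono_left nhdsWithin_le_nhds
    · filter_upwards [self_mem_nhdsWithin] with ρ hρ
      have hρ0 : ρ ≠ 0 := hρ
      simp only [Set.mem_compl_iff, Set.mem_singleton_iff]
      intro h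
      exact hρ0 (by linarith)
  have hΦPT : Tendsto ΦP (𝓝 0) (𝓝 (A y₁ x₀)) := by
    rw [← nhdsNE_sup_pure]
    refine Tendsto.sup ?_ ?_
    · have h1 := (hasDerivAt_iff_tendsto_slope.1 (hPA y₁ x₀)).comp hmap
      refine h1.congr' ?_
      filter_upwards [self_mem_nhdsWithin] with ρ hρ
      have hρ0 : ρ ≠ 0 := hρ
      simp [hΦP_def, hρ0, slope_def_field]
    · have : ΦP 0 = A y₁ x₀ := by simp [hΦP_def]
      simpa [this] using (tendsto_pure_nhds ΦP 0)
  have hΦAT : Tendsto ΦA (𝓝 0) (𝓝 (Ax y₁ x₀)) := by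
    rw [← nhdsNE_sup_pure]
    refine Tendsto.sup ?_ ?_
    · have h1 := (hasDerivAt_iff_tendsto_slope.1 (hAAx y₁ x₀)).comp hmap
      refine h1.congr' ?_
      filter_upwards [self_mem_nhdsWithin] with ρ hρ
      have hρ0 : ρ ≠ 0 := hρ
      simp [hΦA_def, hρ0, slope_def_field]
    · have : ΦA 0 = Ax y₁ x₀ := by simp [hΦA_def]
      simpa [this] using (tendsto_pure_nhds ΦA 0)
  -- product identities
  have hQpeq : ∀ k, Qp k = ΦP (r k) * t k := by
    intro k
    have hnum : P (w k) x₀ - P y₁ x₀ = P y₁ (x₀ + r k) - P y₁ x₀ := by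
      rw [hPt' (w k) x₀]
    by_cases hrk : r k = 0
    · simp [hQp_def, hnum, hrk, ht_def]
    · rw [hQp_def]
      simp only [hnum, hΦP_def, if_neg hrk, ht_def]
      field_simp
  have hQaeq : ∀ k, Qa k = ΦA (r k) * t k := by
    intro k
    have hnum : A (w k) x₀ - A y₁ x₀ = A y₁ (x₀ + r k) - A y₁ x₀ := by
      rw [hAt' (w k) x₀]
    by_cases hrk : r k = 0
    · simp [hQa_def, hnum, hrk, ht_def]
    · rw [hQa_def]
      simp only [hnum, hΦA_def, if_neg hrk, ht_def]
      field_simp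
  -- case split
  by_cases hbig : ∀ C : ℝ, ∀ᶠ k in atTop, C < |t k|
  · -- |t| → ∞ : A y₁ x₀ = 0 and Ax y₁ x₀ = 0
    have htinf : Tendsto (fun k => |t k|) atTop atTop := tendsto_atTop.2 fun C => (hbig C).mono fun k hk => hk.le
    have hA0 : A y₁ x₀ = 0 := by
      by_contra hA
      have h1 : Tendsto (fun k => |ΦP (r k)|) atTop (𝓝 |A y₁ x₀|) :=
        ((continuous_abs.tendsto _).comp (hΦPT.comp hr0))
      have h2 : Tendsto (fun k => |ΦP (r k)| * |t k|) atTop atTop :=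
        Tendsto.pos_mul_atTop (abs_pos.2 hA) h1 htinf
      have h3 : Tendsto (fun k => |Qp k|) atTop atTop := by
        refine h2.congr fun k => ?_
        rw [hQpeq k, abs_mul]
      exact not_tendsto_atTop_of_tendsto_nhds ((continuous_abs.tendsto _).comp hQpT) h3
    have hAx0 : Ax y₁ x₀ = 0 := by
      by_contra hAx
      have h1 : Tendsto (fun k => |ΦA (r k)|) atTop (𝓝 |Ax y₁ x₀|) :=
        ((continuous_abs.tendsto _).comp (hΦAT.comp hr0))
      have h2 : Tendsto (fun k => |ΦA (r k)| * |t k|) atTop atTop :=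
        Tendsto.pos_mul_atTop (abs_pos.2 hAx) h1 htinf
      have h3 : Tendsto (fun k => |Qa k|) atTop atTop := by
        refine h2.congr fun k => ?_
        rw [hQaeq k, abs_mul]
      exact not_tendsto_atTop_of_tendsto_nhds ((continuous_abs.tendsto _).comp hQaT) h3
    rw [hA0, hAx0]
    ring
  · -- bounded frequently : extract converging subsequence of t
    push_neg at hbig
    obtain ⟨C, hC⟩ := hbig
    have hfreq : ∃ᶠ k in atTop, |t k| ≤ C := by
      exact hC
    obtain ⟨φ, hφmono, hφC⟩ := Filter.extraction_of_frequently_atTop hfreq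
    have hmem : ∀ n, t (φ n) ∈ Icc (-C) C := fun n => abs_le.1 (hφC n)
    obtain ⟨σ, hσmem, ψ, hψmono, hψT⟩ := (isCompact_Icc (a := -C) (b := C)).tendsto_subseq hmem
    set m : ℕ → ℕ := fun k => φ (ψ k) with hm_def
    have hmmono : StrictMono m := hφmono.comp hψmono
    have hmT : Tendsto m atTop atTop := hmmono.tendsto_atTop
    have htm : Tendsto (fun k => t (m k)) atTop (𝓝 σ) := hψT
    have hrm : Tendsto (fun k => r (m k)) atTop (𝓝 0) := hr0.comp hmT
    have hB_eq : B y₁ x₀ = A y₁ x₀ * σ := by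
      have h1 : Tendsto (fun k => Qp (m k)) atTop (𝓝 (B y₁ x₀)) := hQpT.comp hmT
      have h2 : Tendsto (fun k => ΦP (r (m k)) * t (m k)) atTop (𝓝 (A y₁ x₀ * σ)) :=
        (hΦPT.comp hrm).mul htm
      have h3 : (fun k => Qp (m k)) = fun k => ΦP (r (m k)) * t (m k) :=
        funext fun k => hQpeq (m k)
      exact tendsto_nhds_unique (h3 ▸ h1) h2
    have hAy_eq : Ay y₁ x₀ = Ax y₁ x₀ * σ := by
      have h1 : Tendsto (fun k => Qa (m k)) atTop (𝓝 (Ay y₁ x₀)) := hQaT.comp hmT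
      have h2 : Tendsto (fun k => ΦA (r (m k)) * t (m k)) atTop (𝓝 (Ax y₁ x₀ * σ)) :=
        (hΦAT.comp hrm).mul htm
      have h3 : (fun k => Qa (m k)) = fun k => ΦA (r (m k)) * t (m k) :=
        funext fun k => hQaeq (m k)
      exact tendsto_nhds_unique (h3 ▸ h1) h2
    rw [hB_eq, hAy_eq]
    ring

/-- Core lemma: translation structure of slices implies the Hoyer determinant identity at
`(x₀, y₀)`, given uniqueness of translation amounts. -/
lemma core_main
    (P A Ax B Ay : ℝ → ℝ → ℝ) (s : ℝ → ℝ) (y₀ x₀ : ℝ)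
    (hPA : ∀ y x, HasDerivAt (fun x' => P y x') (A y x) x)
    (hAAx : ∀ y x, HasDerivAt (fun x' => A y x') (Ax y x) x)
    (hPB : ∀ y x, HasDerivAt (fun y' => P y' x) (B y x) y)
    (hAAy : ∀ y x, HasDerivAt (fun y' => A y' x) (Ay y x) y)
    (hcAx : Continuous fun y => Ax y x₀)
    (hcB : Continuous fun y => B y x₀)
    (hcAy : Continuous fun y => Ay y x₀)
    (hPt : ∀ y x, P y x = P y₀ (x + s y))
    (hAt : ∀ y x, A y x = A y₀ (x + s y))
    (huniq : ∀ s₁ s₂ : ℝ, (∀ x, P y₀ (x + s₁) = P y₀ (x + s₂)) → s₁ = s₂) :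
    A y₀ x₀ * Ay y₀ x₀ = Ax y₀ x₀ * B y₀ x₀ := by
  -- continuity of P and A in each variable
  have hPxc : ∀ y, Continuous fun x => P y x :=
    fun y => continuous_iff_continuousAt.2 fun x => (hPA y x).continuousAt
  have hPyc : ∀ x, Continuous fun y => P y x :=
    fun x => continuous_iff_continuousAt.2 fun y => (hPB y x).continuousAt
  have hAyc : ∀ x, Continuous fun y => A y x :=
    fun x => continuous_iff_continuousAt.2 fun y => (hAAy y x).continuousAt
  -- closed graph property of s
  have hCG : ∀ (u : ℕ → ℝ) (ys σ : ℝ), Tendsto u atTop (𝓝 ys) →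
      Tendsto (fun k => s (u k)) atTop (𝓝 σ) → s ys = σ := by
    intro u ys σ hu hsu
    refine huniq (s ys) σ fun x => ?_
    have h1 : Tendsto (fun k => P (u k) x) atTop (𝓝 (P ys x)) :=
      ((hPyc x).tendsto ys).comp hu
    have h2 : Tendsto (fun k => P y₀ (x + s (u k))) atTop (𝓝 (P y₀ (x + σ))) :=
      ((hPxc y₀).tendsto (x + σ)).comp (tendsto_const_nhds.add hsu)
    have h3 : (fun k => P (u k) x) = fun k => P y₀ (x + s (u k)) :=
      funext fun k => hPt (u k) x
    have h4 : P ys x = P y₀ (x + σ) := tendsto_nhds_unique (h3 ▸ h1) h2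
    rw [← hPt ys x, h4]
  -- the sets where s is bounded are closed
  have hC : ∀ M : ℕ, IsClosed {y : ℝ | |s y| ≤ (M : ℝ)} := by
    intro M
    refine IsSeqClosed.isClosed ?_
    intro u p hu hup
    have hmem : ∀ n, s (u n) ∈ Icc (-(M : ℝ)) (M : ℝ) := fun n => abs_le.1 (hu n)
    obtain ⟨σ, hσmem, φ, hφmono, hφT⟩ :=
      (isCompact_Icc (a := -(M : ℝ)) (b := (M : ℝ))).tendsto_subseq hmem
    have : s p = σ := hCG (u ∘ φ) p σ (hup.comp hφmono.tendsto_atTop) hφT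
    rw [Set.mem_setOf_eq, this]
    exact abs_le.2 hσmem
  -- main step: in every right-neighbourhood of y₀ there is a point where the identity holds
  have hkey : ∀ δ : ℝ, 0 < δ → ∃ y₁ ∈ Ioo y₀ (y₀ + δ),
      A y₁ x₀ * Ay y₁ x₀ = Ax y₁ x₀ * B y₁ x₀ := by
    intro δ hδ
    set a := y₀ + δ / 3 with ha_def
    set b := y₀ + δ / 2 with hb_def
    have hab : a < b := by rw [ha_def, hb_def]; linarith
    haveI : Nonempty (Icc a b) := ⟨⟨a, left_mem_Icc.2 hab.le⟩⟩
    haveI : CompleteSpace (Icc a b) := (isClosed_Icc (a := a) (b := b)).completeSpace_coe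
    have hbaire := nonempty_interior_of_iUnion_of_closed
      (X := Icc a b) (ι := ℕ)
      (f := fun M => Subtype.val ⁻¹' {y : ℝ | |s y| ≤ (M : ℝ)})
      (fun M => (hC M).preimage continuous_subtype_val)
      (by
        rw [Set.eq_univ_iff_forall]
        intro ω
        obtain ⟨M, hM⟩ := exists_nat_ge |s ω.1|
        exact Set.mem_iUnion.2 ⟨M, hM⟩)
    obtain ⟨M, ω, hω⟩ := hbaire
    rw [mem_interior_iff_mem_nhds, Metric.mem_nhds_iff] at hω
    obtain ⟨ε, hε, hball⟩ := hω
    set ys := ω.1 with hys_def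
    have hysmem : ys ∈ Icc a b := ω.2
    -- the good open interval
    set u := max a (ys - ε) with hu_def
    set v := min b (ys + ε) with hv_def
    have huv : u < v := by
      rcases lt_or_eq_of_le hysmem.2 with h | h
      · have h1 : u ≤ ys := max_le hysmem.1 (by linarith)
        have h2 : ys < v := lt_min h (by linarith)
        linarith
      · have h1 : u < b := max_lt hab (by rw [h]; linarith)
        have h2 : b ≤ v := by
          rw [hv_def]
          exact le_min le_rfl (by rw [h]; linarith)
        linarith
    have hsub : ∀ z ∈ Ioo u v, |s z| ≤ (M : ℝ) := by
      intro z hz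
      have hza : a ≤ z := le_of_lt (lt_of_le_of_lt (le_max_left _ _) hz.1)
      have hzb : z ≤ b := le_of_lt (lt_of_lt_of_le hz.2 (min_le_left _ _))
      have hzd : dist (⟨z, ⟨hza, hzb⟩⟩ : Icc a b) ω < ε := by
        rw [Subtype.dist_eq, Real.dist_eq]
        have h1 : ys - ε < z := lt_of_le_of_lt (le_max_right _ _) hz.1
        have h2 : z < ys + ε := lt_of_lt_of_le hz.2 (min_le_right _ _)
        rw [abs_lt]
        constructor <;> [linarith; linarith]
      exact hball hzd
    set y₁ := (u + v) / 2 with hy₁_def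
    have hy₁mem : y₁ ∈ Ioo u v := ⟨by rw [hy₁_def]; linarith, by rw [hy₁_def]; linarith⟩
    -- the approaching sequence
    set w : ℕ → ℝ := fun k => y₁ + (v - y₁) / (k + 2) with hw_def
    have hvy₁ : 0 < v - y₁ := by rw [hy₁_def]; linarith
    have hwmem : ∀ k, w k ∈ Ioo u v := by
      intro k
      have hk2 : (1 : ℝ) < (k : ℝ) + 2 := by have : (0:ℝ) ≤ (k:ℝ) := Nat.cast_nonneg k; linarith
      constructor
      · have : 0 < (v - y₁) / (k + 2) := by positivity
        rw [hw_def]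
        have := hy₁mem.1
        simp only
        linarith
      · rw [hw_def]
        simp only
        have h1 : (v - y₁) / ((k : ℝ) + 2) < v - y₁ := by
          rw [div_lt_iff₀ (by positivity)]
          nlinarith
        linarith
    have hwne : ∀ k, w k ≠ y₁ := by
      intro k
      have : 0 < (v - y₁) / ((k : ℝ) + 2) := by positivity
      rw [hw_def]
      simp only
      intro h
      nlinarith [h]
    have hwT : Tendsto w atTop (𝓝 y₁) := by
      have h1 : Tendsto (fun k : ℕ => (v - y₁) / ((k : ℝ) + 2)) atTop (𝓝 0) := by
        apply Tendsto.div_atTop tendsto_const_nhds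
        exact tendsto_atTop_add_const_right atTop 2 tendsto_natCast_atTop_atTop
      have := tendsto_const_nhds.add h1 (f := fun _ : ℕ => y₁)
      simpa using this
    -- boundedness of s along the sequence, Bolzano–Weierstrass
    have hsB : ∀ k, s (w k) ∈ Icc (-(M : ℝ)) (M : ℝ) := fun k => abs_le.1 (hsub _ (hwmem k))
    obtain ⟨σ, hσmem, ψ, hψmono, hψT⟩ :=
      (isCompact_Icc (a := -(M : ℝ)) (b := (M : ℝ))).tendsto_subseq hsB
    have hwψT : Tendsto (w ∘ ψ) atTop (𝓝 y₁) := hwT.comp hψmono.tendsto_atTop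
    have hsy₁ : s y₁ = σ := hCG (w ∘ ψ) y₁ σ hwψT hψT
    have hsψT : Tendsto (fun k => s ((w ∘ ψ) k)) atTop (𝓝 (s y₁)) := by
      rw [hsy₁]; exact hψT
    have hgoal := core_point P A Ax B Ay s y₀ x₀ y₁ hPA hAAx hPB hAAy hPt hAt
      (w ∘ ψ) hwψT (fun k => hwne (ψ k)) hsψT
    refine ⟨y₁, ⟨?_, ?_⟩, hgoal⟩
    · have : y₀ < a := by rw [ha_def]; linarith
      have : a ≤ u := le_max_left _ _
      linarith [hy₁mem.1]
    · have : b < y₀ + δ := by rw [hb_def]; linarith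
      have : v ≤ b := min_le_left _ _
      linarith [hy₁mem.2]
  -- construct the approximating sequence to y₀ and pass to the limit
  have hseq : ∀ n : ℕ, ∃ y₁ ∈ Ioo y₀ (y₀ + 1 / ((n : ℝ) + 1)),
      A y₁ x₀ * Ay y₁ x₀ = Ax y₁ x₀ * B y₁ x₀ :=
    fun n => hkey _ (by positivity)
  choose Y hYmem hYeq using hseq
  have hYT : Tendsto Y atTop (𝓝 y₀) := by
    have hlow : ∀ n, y₀ ≤ Y n := fun n => (hYmem n).1.le
    have hup : ∀ n, Y n ≤ y₀ + 1 / ((n : ℝ) + 1) := fun n => (hYmem n).2.le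
    have h1 : Tendsto (fun n : ℕ => y₀ + 1 / ((n : ℝ) + 1)) atTop (𝓝 (y₀ + 0)) := by
      refine tendsto_const_nhds.add ?_
      apply Tendsto.div_atTop tendsto_const_nhds
      exact tendsto_atTop_add_const_right atTop 1 tendsto_natCast_atTop_atTop
    rw [add_zero] at h1
    exact tendsto_of_tendsto_of_tendsto_of_le_of_le tendsto_const_nhds h1 hlow hup
  have hDc : Continuous fun y => A y x₀ * Ay y x₀ - Ax y x₀ * B y x₀ :=
    ((hAyc x₀).mul hcAy).sub (hcAx.mul hcB)
  have h1 : Tendsto (fun n => A (Y n) x₀ * Ay (Y n) x₀ - Ax (Y n) x₀ * B (Y n) x₀)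
      atTop (𝓝 (A y₀ x₀ * Ay y₀ x₀ - Ax y₀ x₀ * B y₀ x₀)) := (hDc.tendsto y₀).comp hYT
  have h2 : (fun n => A (Y n) x₀ * Ay (Y n) x₀ - Ax (Y n) x₀ * B (Y n) x₀) = fun _ => 0 :=
    funext fun n => by rw [hYeq n]; ring
  have h3 : A y₀ x₀ * Ay y₀ x₀ - Ax y₀ x₀ * B y₀ x₀ = 0 := by
    have := h2 ▸ h1
    exact tendsto_nhds_unique this tendsto_const_nhds
  linarith


lemma aux_d3 {F : ℝ → ℝ} (h : ContDiff ℝ 3 F) :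
    Differentiable ℝ F ∧ Differentiable ℝ (deriv F) ∧ Differentiable ℝ (deriv (deriv F)) ∧
      Continuous (deriv (deriv (deriv F))) := by
  rw [show (3 : WithTop ℕ∞) = 2 + 1 from by norm_num] at h
  obtain ⟨hd1, -, h2⟩ := contDiff_succ_iff_deriv.1 h
  rw [show (2 : WithTop ℕ∞) = 1 + 1 from by norm_num] at h2
  obtain ⟨hd2, -, h1⟩ := contDiff_succ_iff_deriv.1 h2
  rw [show (1 : WithTop ℕ∞) = 0 + 1 from by norm_num] at h1
  obtain ⟨hd3, -, h0⟩ := contDiff_succ_iff_deriv.1 h1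
  exact ⟨hd1, hd2, hd3, h0.continuous⟩

/-- A positive continuous integrable function on `ℝ` has no nonzero period. -/
lemma aux_no_period {q : ℝ → ℝ} (hq : Integrable q) (hpos : ∀ x, 0 < q x)
    (hc : Continuous q) {δ : ℝ} (hδ : δ ≠ 0) (hper : ∀ x, q (x + δ) = q x) : False := by
  have hper' : Function.Periodic q δ := hper
  have hT : Function.Periodic q |δ| := by
    rcases abs_choice δ with h | h
    · rwa [h]
    · rw [h]; exact hper'.neg
  have hTpos : 0 < |δ| := abs_pos.2 hδ
  have h_int : ∀ t₁ t₂ : ℝ, IntervalIntegrable q MeasureSpace.volume t₁ t₂ :=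
    fun t₁ t₂ => hq.intervalIntegrable
  have htend := hT.tendsto_atTop_intervalIntegral_of_pos' (h_int 0 |δ|) hpos hTpos
  have hbound : ∀ t : ℝ, 0 ≤ t → (∫ x in (0:ℝ)..t, q x) ≤ ∫ x, q x := by
    intro t ht
    rw [intervalIntegral.integral_of_le ht]
    exact setIntegral_le_integral hq (Filter.Eventually.of_forall fun x => (hpos x).le)
  obtain ⟨t, ht⟩ := (htend.eventually_gt_atTop (∫ x, q x)).and
    (eventually_ge_atTop (0:ℝ)) |>.exists
  exact absurd (hbound t ht.2) (not_le.2 ht.1)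

/-- Corollary 2 of the paper: if the additive noise model `Y = f(X) + ε`
admits a backward additive noise representation at the level of densities, then the triple
`(f, p_X, p_ε)` satisfies the differential equation of Hoyer et al. (2009), where
`ν := log p_ε` and `ξ := log p_X`. -/
theorem anm_identifiability_differential_equation
    (f g : ℝ → ℝ)
    (pX pEps pEpsHat pY : ℝ → ℝ)
    (hpX : ∀ x, 0 < pX x) (hpXi : ∫ x, pX x = 1)
    (hpE : ∀ e, 0 < pEps e) (hpEi : ∫ e, pEps e = 1)
    (hpEh : ∀ e, 0 < pEpsHat e) (hpEhi : ∫ e, pEpsHat e = 1)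
    (hpY : ∀ y, 0 < pY y) (hpYi : ∫ y, pY y = 1)
    (hpXsmooth : ContDiff ℝ 3 pX) (hpEsmooth : ContDiff ℝ 3 pEps)
    (hfsmooth : ContDiff ℝ 3 f)
    (ν ξ : ℝ → ℝ)
    (hν : ν = fun t => Real.log (pEps t))
    (hξ : ξ = fun t => Real.log (pX t))
    -- the backward additive-noise density identity
    (hback : ∀ x y : ℝ, pEpsHat (x - g y) = pX x * pEps (y - f x) / pY y) :
    ∀ x y : ℝ, iteratedDeriv 2 ν (y - f x) * deriv f x ≠ 0 →
      iteratedDeriv 3 ξ x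
        = iteratedDeriv 2 ξ x *
            (-(iteratedDeriv 3 ν (y - f x) * deriv f x) / iteratedDeriv 2 ν (y - f x)
              + iteratedDeriv 2 f x / deriv f x)
          - 2 * iteratedDeriv 2 ν (y - f x) * iteratedDeriv 2 f x * deriv f x
          + deriv ν (y - f x) * iteratedDeriv 3 f x
          + deriv ν (y - f x) * iteratedDeriv 3 ν (y - f x) * iteratedDeriv 2 f x
              * deriv f x / iteratedDeriv 2 ν (y - f x)
          - deriv ν (y - f x) * (iteratedDeriv 2 f x) ^ 2 / deriv f x := by
  intro x0 yb hcond
  -- smoothness of ξ, ν, f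
  have hξs : ContDiff ℝ 3 ξ := by
    rw [hξ]; exact hpXsmooth.log fun x => (hpX x).ne'
  have hνs : ContDiff ℝ 3 ν := by
    rw [hν]; exact hpEsmooth.log fun x => (hpE x).ne'
  obtain ⟨hξ1, hξ2, hξ3, hξ4⟩ := aux_d3 hξs
  obtain ⟨hν1, hν2, hν3, hν4⟩ := aux_d3 hνs
  obtain ⟨hf1, hf2, hf3, hf4⟩ := aux_d3 hfsmooth
  -- notation for the iterated derivatives
  set ν' := deriv ν with hν'd
  set ν'' := deriv ν' with hν''d
  set ν''' := deriv ν'' with hν'''d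
  set ξ' := deriv ξ with hξ'd
  set ξ'' := deriv ξ' with hξ''d
  set ξ''' := deriv ξ'' with hξ'''d
  set f' := deriv f with hf'd
  set f'' := deriv f' with hf''d
  set f''' := deriv f'' with hf'''d
  -- the forward log-density slices and their derivatives
  set P : ℝ → ℝ → ℝ := fun y x => ξ' x + ν' (y - f x) * -(f' x) with hP_def
  set A : ℝ → ℝ → ℝ := fun y x =>
    ξ'' x + (ν'' (y - f x) * -(f' x) * -(f' x) + ν' (y - f x) * -(f'' x)) with hA_def
  set Ax : ℝ → ℝ → ℝ := fun y x =>
    ξ''' x - ν''' (y - f x) * (f' x) ^ 3 + 3 * ν'' (y - f x) * f' x * f'' x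
      - ν' (y - f x) * f''' x with hAx_def
  set B : ℝ → ℝ → ℝ := fun y x => -(ν'' (y - f x) * f' x) with hB_def
  set Ay : ℝ → ℝ → ℝ := fun y x =>
    ν''' (y - f x) * (f' x) ^ 2 - ν'' (y - f x) * f'' x with hAy_def
  -- inner derivative
  have hinner : ∀ (y x : ℝ), HasDerivAt (fun x' => y - f x') (-(f' x)) x :=
    fun y x => ((hf1 x).hasDerivAt).const_sub y
  have hinnery : ∀ (y x : ℝ), HasDerivAt (fun y' => y' - f x) 1 y :=
    fun y x => (hasDerivAt_id y).sub_const (f x)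
  -- x-derivatives
  have hPA : ∀ y x, HasDerivAt (fun x' => P y x') (A y x) x := by
    intro y x
    have hc := ((hν2 (y - f x)).hasDerivAt).comp x (hinner y x)
    exact ((hξ2 x).hasDerivAt).fun_add
      (hc.fun_mul ((hf2 x).hasDerivAt.fun_neg))
  have hAAx : ∀ y x, HasDerivAt (fun x' => A y x') (Ax y x) x := by
    intro y x
    have h1 : HasDerivAt (fun x' => ν'' (y - f x') * -(f' x'))
        (ν''' (y - f x) * -(f' x) * -(f' x) + ν'' (y - f x) * -(f'' x)) x :=
      by have hc := ((hν3 (y - f x)).hasDerivAt).comp x (hinner y x)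
         exact hc.fun_mul ((hf2 x).hasDerivAt.fun_neg)
    have h2 : HasDerivAt (fun x' => ν'' (y - f x') * -(f' x') * -(f' x'))
        ((ν''' (y - f x) * -(f' x) * -(f' x) + ν'' (y - f x) * -(f'' x)) * -(f' x)
          + ν'' (y - f x) * -(f' x) * -(f'' x)) x :=
      h1.mul ((hf2 x).hasDerivAt.neg)
    have h3 : HasDerivAt (fun x' => ν' (y - f x') * -(f'' x'))
        (ν'' (y - f x) * -(f' x) * -(f'' x) + ν' (y - f x) * -(f''' x)) x :=
      by have hc := ((hν2 (y - f x)).hasDerivAt).comp x (hinner y x)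
         exact hc.fun_mul ((hf3 x).hasDerivAt.fun_neg)
    have h4 := ((hξ3 x).hasDerivAt).add (h2.add h3)
    refine h4.congr_deriv ?_
    rw [hAx_def]
    ring
  -- y-derivatives
  have hPB : ∀ y x, HasDerivAt (fun y' => P y' x) (B y x) y := by
    intro y x
    have h1 : HasDerivAt (fun y' => ν' (y' - f x) * -(f' x))
        (ν'' (y - f x) * 1 * -(f' x)) y :=
      (((hν2 (y - f x)).hasDerivAt).comp y (hinnery y x)).mul_const (-(f' x))
    have h2 := h1.const_add (ξ' x)
    refine h2.congr_deriv ?_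
    rw [hB_def]
    ring
  have hAAy : ∀ y x, HasDerivAt (fun y' => A y' x) (Ay y x) y := by
    intro y x
    have h1 : HasDerivAt (fun y' => ν'' (y' - f x) * -(f' x) * -(f' x))
        (ν''' (y - f x) * 1 * -(f' x) * -(f' x)) y :=
      ((((hν3 (y - f x)).hasDerivAt).comp y (hinnery y x)).mul_const (-(f' x))).mul_const
        (-(f' x))
    have h2 : HasDerivAt (fun y' => ν' (y' - f x) * -(f'' x))
        (ν'' (y - f x) * 1 * -(f'' x)) y :=
      (((hν2 (y - f x)).hasDerivAt).comp y (hinnery y x)).mul_const (-(f'' x))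
    have h3 := (h1.add h2).const_add (ξ'' x)
    refine h3.congr_deriv ?_
    rw [hAy_def]
    ring
  -- continuity in y at x0
  have hν'c : Continuous ν' := hν2.continuous
  have hν''c : Continuous ν'' := hν3.continuous
  have hν'''c : Continuous ν''' := hν4
  have hiy : Continuous fun y : ℝ => y - f x0 := continuous_id.sub continuous_const
  have hcAx : Continuous fun y => Ax y x0 := by
    rw [hAx_def]
    fun_prop
  have hcB : Continuous fun y => B y x0 := by
    rw [hB_def]
    fun_prop
  have hcAy : Continuous fun y => Ay y x0 := by
    rw [hAy_def]
    fun_prop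
  -- the translation structure coming from the backward model
  set s : ℝ → ℝ := fun y => g yb - g y with hs_def
  set c : ℝ → ℝ := fun y => Real.log (pY y) - Real.log (pY yb) with hc_def
  set ρ : ℝ → ℝ → ℝ := fun y x => ξ x + ν (y - f x) with hρ_def
  have hρd : ∀ y x, HasDerivAt (fun x' => ρ y x') (P y x) x := by
    intro y x
    exact ((hξ1 x).hasDerivAt).add (((hν1 (y - f x)).hasDerivAt).comp x (hinner y x))
  have hS : ∀ y x, ρ y x = ρ yb (x + s y) + c y := by
    intro y x
    have h1 := hback x y
    have h2 := hback (x + s y) yb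
    have harg : x + s y - g yb = x - g y := by rw [hs_def]; ring
    rw [harg] at h2
    have h3 : pX x * pEps (y - f x) / pY y
        = pX (x + s y) * pEps (yb - f (x + s y)) / pY yb := h1 ▸ h2
    have h4 := congrArg Real.log h3
    rw [Real.log_div (mul_pos (hpX x) (hpE _)).ne' (hpY y).ne',
      Real.log_div (mul_pos (hpX _) (hpE _)).ne' (hpY yb).ne',
      Real.log_mul (hpX x).ne' (hpE _).ne', Real.log_mul (hpX _).ne' (hpE _).ne'] at h4
    rw [hρ_def, hc_def, hξ, hν]
    simp only
    linarith
  have hPt : ∀ y x, P y x = P yb (x + s y) := by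
    intro y x
    have hF : (fun x' => ρ y x') = fun x' => ρ yb (x' + s y) + c y :=
      funext fun x' => hS y x'
    have hG : HasDerivAt (fun x' => ρ yb (x' + s y) + c y) (P yb (x + s y) * 1) x :=
      by have hc := (hρd yb (x + s y)).comp x ((hasDerivAt_id x).add_const (s y))
         exact hc.add_const (c y)
    have hH : HasDerivAt (fun x' => ρ y x') (P yb (x + s y) * 1) x := by
      rw [hF]; exact hG
    have := (hρd y x).unique hH
    rw [this, mul_one]
  have hAt : ∀ y x, A y x = A yb (x + s y) := by
    intro y x
    have hF : (fun x' => P y x') = fun x' => P yb (x' + s y) :=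
      funext fun x' => hPt y x'
    have hG : HasDerivAt (fun x' => P yb (x' + s y)) (A yb (x + s y) * 1) x :=
      by have hc := (hPA yb (x + s y)).comp x ((hasDerivAt_id x).add_const (s y))
         exact hc
    have hH : HasDerivAt (fun x' => P y x') (A yb (x + s y) * 1) x := by
      rw [hF]; exact hG
    have := (hPA y x).unique hH
    rw [this, mul_one]
  -- uniqueness of translation amounts
  set q : ℝ → ℝ := fun u => pX u * pEps (yb - f u) with hq_def
  have hqpos : ∀ u, 0 < q u := fun u => mul_pos (hpX u) (hpE _)
  have hqc : Continuous q :=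
    (hpXsmooth.continuous).mul ((hpEsmooth.continuous).comp
      (continuous_const.sub hfsmooth.continuous))
  have hq_exp : ∀ u, q u = Real.exp (ρ yb u) := by
    intro u
    rw [hρ_def, hξ, hν]
    simp only
    rw [Real.exp_add, Real.exp_log (hpX u), Real.exp_log (hpE _)]
  have hIpEh : Integrable pEpsHat := by
    by_contra h
    rw [integral_undef h] at hpEhi
    norm_num at hpEhi
  have hq_eq : ∀ u, q u = pY yb * pEpsHat (u - g yb) := by
    intro u
    have h1 := hback u yb
    rw [hq_def]
    simp only
    rw [h1]
    have h2 := (hpY yb).ne'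
    field_simp
  have hIq : Integrable q := by
    rw [show q = fun u => pY yb * pEpsHat (u - g yb) from funext hq_eq]
    exact (hIpEh.comp_sub_right (g yb)).const_mul _
  have hqint : ∫ u, q u = pY yb := by
    rw [show q = fun u => pY yb * pEpsHat (u - g yb) from funext hq_eq]
    rw [integral_const_mul, integral_sub_right_eq_self pEpsHat (g yb), hpEhi, mul_one]
  have huniq : ∀ s₁ s₂ : ℝ, (∀ x, P yb (x + s₁) = P yb (x + s₂)) → s₁ = s₂ := by
    intro s₁ s₂ hsame
    by_contra hne
    set δ := s₁ - s₂ with hδ_def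
    have hδ : δ ≠ 0 := sub_ne_zero.2 hne
    have hper : ∀ u, P yb (u + δ) = P yb u := by
      intro u
      have h := hsame (u - s₂)
      rw [show u - s₂ + s₁ = u + δ by rw [hδ_def]; ring, show u - s₂ + s₂ = u by ring] at h
      exact h
    set F : ℝ → ℝ := fun u => ρ yb (u + δ) - ρ yb u with hF_def
    have hFd : ∀ u, HasDerivAt F (P yb (u + δ) * 1 - P yb u) u := fun u =>
      by have hc := (hρd yb (u + δ)).comp u ((hasDerivAt_id u).add_const δ)
         exact hc.fun_sub (hρd yb u)
    have hFdiff : Differentiable ℝ F := fun u => (hFd u).differentiableAt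
    have hFderiv : ∀ u, deriv F u = 0 := by
      intro u
      rw [(hFd u).deriv, mul_one, hper u, sub_self]
    have hconst : ∀ u, F u = F 0 := fun u => is_const_of_deriv_eq_zero hFdiff hFderiv u 0
    have hqper : ∀ u, q (u + δ) = Real.exp (F 0) * q u := by
      intro u
      rw [hq_exp (u + δ), hq_exp u, ← Real.exp_add]
      congr 1
      have h0 : F 0 = ρ yb (0 + δ) - ρ yb 0 := rfl
      have h1 := hconst u
      rw [hF_def] at h1
      simp only at h1
      rw [h0]
      linarith
    have hexpK : Real.exp (F 0) = 1 := by
      have h1 : ∫ u, q (u + δ) = ∫ u, q u := integral_add_right_eq_self q δ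
      have h2 : ∫ u, q (u + δ) = Real.exp (F 0) * ∫ u, q u := by
        rw [show (fun u => q (u + δ)) = fun u => Real.exp (F 0) * q u from funext hqper]
        exact integral_const_mul _ _
      rw [h2, hqint] at h1
      have h3 : Real.exp (F 0) * pY yb = 1 * pY yb := by rw [one_mul]; exact h1
      exact mul_right_cancel₀ (hpY yb).ne' h3
    have hqper' : ∀ u, q (u + δ) = q u := by
      intro u
      rw [hqper u, hexpK, one_mul]
    exact aux_no_period hIq hqpos hqc hδ hqper'
  -- apply the core lemma
  have hmain := core_main P A Ax B Ay s yb x0 hPA hAAx hPB hAAy hcAx hcB hcAy hPt hAt huniq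
  -- translate the conclusion into the required form
  have h2ν : iteratedDeriv 2 ν = ν'' := by
    rw [show (2 : ℕ) = 1 + 1 from rfl, iteratedDeriv_succ, iteratedDeriv_one, hν''d, hν'd]
  have h3ν : iteratedDeriv 3 ν = ν''' := by
    rw [show (3 : ℕ) = 2 + 1 from rfl, iteratedDeriv_succ,
      show (2 : ℕ) = 1 + 1 from rfl, iteratedDeriv_succ, iteratedDeriv_one,
      hν'''d, hν''d, hν'd]
  have h2ξ : iteratedDeriv 2 ξ = ξ'' := by
    rw [show (2 : ℕ) = 1 + 1 from rfl, iteratedDeriv_succ, iteratedDeriv_one, hξ''d, hξ'd]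
  have h3ξ : iteratedDeriv 3 ξ = ξ''' := by
    rw [show (3 : ℕ) = 2 + 1 from rfl, iteratedDeriv_succ,
      show (2 : ℕ) = 1 + 1 from rfl, iteratedDeriv_succ, iteratedDeriv_one,
      hξ'''d, hξ''d, hξ'd]
  have h2f : iteratedDeriv 2 f = f'' := by
    rw [show (2 : ℕ) = 1 + 1 from rfl, iteratedDeriv_succ, iteratedDeriv_one, hf''d, hf'd]
  have h3f : iteratedDeriv 3 f = f''' := by
    rw [show (3 : ℕ) = 2 + 1 from rfl, iteratedDeriv_succ,
      show (2 : ℕ) = 1 + 1 from rfl, iteratedDeriv_succ, iteratedDeriv_one,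
      hf'''d, hf''d, hf'd]
  rw [h2ν] at hcond
  rw [h2ν, h3ν, h2ξ, h3ξ, h2f, h3f]
  -- extract nonvanishing facts
  have hb : ν'' (yb - f x0) ≠ 0 := fun h => hcond (by rw [h]; ring)
  have hu : f' x0 ≠ 0 := fun h => hcond (by rw [h]; ring)
  -- hmain : A yb x0 * Ay yb x0 = Ax yb x0 * B yb x0
  rw [hA_def, hAy_def, hAx_def, hB_def] at hmain
  simp only at hmain
  field_simp
  linear_combination hmain
end
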